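/- Let V be a finite-dimensional complex vector space, let A be a linear endomorphism of V, and let T ∈ Col(A). Then there exists a bijection π of the set of eigenvalues of A onto itself such that T V_λ = V_{π(λ)} for every eigenvalue λ of A, where V_λ denotes the generalized eigenspace of A for λ. -/

import Mathlib

open Submodule

/-- A subspace `M` is invariant under the endomorphism `A`. -/
def InvSub {V : Type*} [AddCommGroup V] [Module ℂ V] (A : V →ₗ[ℂ] V)
    (M : Submodule ℂ V) : Prop :=
  M.map A ≤ M

/-- `T ∈ Col(A)`: `T` is bijective and a subspace is `A`-invariant iff its image
under `T` is `A`-invariant. -/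
def Col {V : Type*} [AddCommGroup V] [Module ℂ V] (A T : V →ₗ[ℂ] V) : Prop :=
  Function.Bijective T ∧ ∀ M : Submodule ℂ V, InvSub A M ↔ InvSub A (M.map T)

/-- The cyclic subspace `(A)_x`, i.e. the span of `{A^n x : n ≥ 0}`. -/
def cyc {V : Type*} [AddCommGroup V] [Module ℂ V] (A : V →ₗ[ℂ] V) (x : V) :
    Submodule ℂ V :=
  Submodule.span ℂ (Set.range fun n : ℕ => (A ^ n) x)

/-- The generalized eigenspace `V_μ = ker((A - μ I)^d)` with `d = dim V`. -/
noncomputable def genEig {V : Type*} [AddCommGroup V] [Module ℂ V] (A : V →ₗ[ℂ] V) (μ : ℂ) :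
    Submodule ℂ V :=
  LinearMap.ker ((A - μ • (1 : V →ₗ[ℂ] V)) ^ (Module.finrank ℂ V))


/-!
A nonzero vector `x` lies in a single generalized eigenspace of `A` exactly when its cyclic
subspace `(A)_x` is join-irreducible in `Lat(A)`. If `x ∈ V_λ`, then `N = A - λ` is nilpotent
on `(A)_x = (N)_x`, and every proper invariant subspace of `(N)_x` lies in `(N)_{Nx}`, which does
not contain `x` (a polynomial with nonzero constant term is coprime to `X ^ d`). Conversely,
`(A)_x` is the join of its intersections with the `V_μ`, so irreducibility forces `x` into one
of them.

`T ∈ Col(A)` induces a lattice automorphism of `Lat(A)` with `T (A)_x = (A)_{Tx}`, so it sends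
vectors of the `V_λ` to vectors of the `V_μ`. Since the `V_μ` are independent, a subspace all of
whose vectors lie in some `V_μ` lies in one of them; so `T V_λ ≤ V_μ`, and the same argument for
`T⁻¹` gives equality.
-/

open Polynomial Module.End

lemma iSupIndep.exists_le_of_forall_exists_mem {R M ι : Type*} [Ring R] [AddCommGroup M]
    [Module R M] {p : ι → Submodule R M} (hp : iSupIndep p) {W : Submodule R M}
    (hW : ∀ w ∈ W, ∃ i, w ∈ p i) : ∃ i, W ≤ p i := by
  by_cases hW0 : W = ⊥
  · obtain ⟨i, -⟩ := hW 0 W.zero_mem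
    exact ⟨i, hW0 ▸ bot_le⟩
  obtain ⟨x, hxW, hx0⟩ := W.exists_mem_ne_zero_of_ne_bot hW0
  obtain ⟨i, hxi⟩ := hW x hxW
  refine ⟨i, fun y hyW => ?_⟩
  obtain ⟨j, hyj⟩ := hW y hyW
  obtain ⟨k, hxyk⟩ := hW (x + y) (add_mem hxW hyW)
  by_cases hji : j = i
  · exact hji ▸ hyj
  by_cases hki : k = i
  · rw [← add_sub_cancel_left x y]
    exact sub_mem (hki ▸ hxyk) hxi
  -- otherwise `x = (x + y) - y` would lie both in `p i` and in the span of the other `p`s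
  have hx_other : x ∈ ⨆ (l) (_ : l ≠ i), p l := by
    simpa using sub_mem (mem_iSup_of_mem k (mem_iSup_of_mem hki hxyk) :
        x + y ∈ ⨆ (l) (_ : l ≠ i), p l)
      (mem_iSup_of_mem j (mem_iSup_of_mem hji hyj))
  exact absurd ((Submodule.disjoint_def.1 (hp i)) x hxi hx_other) hx0

lemma eq_of_maxGenEigenspace_le {K W : Type*} [Field K] [AddCommGroup W] [Module K W]
    {f : Module.End K W} {μ ν : K} (hμ : maxGenEigenspace f μ ≠ ⊥)
    (h : maxGenEigenspace f μ ≤ maxGenEigenspace f ν) : μ = ν := by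
  by_contra hne
  exact hμ (disjoint_self.1 ((disjoint_genEigenspace f hne ⊤ ⊤).mono_right h))

lemma hasEigenvalue_iff_maxGenEigenspace_ne_bot {R M : Type*} [CommRing R] [AddCommGroup M]
    [Module R M] {f : Module.End R M} {μ : R} :
    HasEigenvalue f μ ↔ maxGenEigenspace f μ ≠ ⊥ :=
  (hasUnifEigenvalue_iff_hasUnifEigenvalue_one (by simp)).symm

section

variable {V : Type*} [AddCommGroup V] [Module ℂ V]

section Invariant

variable {A : V →ₗ[ℂ] V} {M : Submodule ℂ V}

lemma InvSub.apply_mem (hM : InvSub A M) {x : V} (hx : x ∈ M) : A x ∈ M :=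
  hM (mem_map_of_mem hx)

lemma invSub_of_forall_apply_mem (h : ∀ x ∈ M, A x ∈ M) : InvSub A M :=
  map_le_iff_le_comap.2 h

lemma InvSub.inf {M' : Submodule ℂ V} (hM : InvSub A M) (hM' : InvSub A M') :
    InvSub A (M ⊓ M') :=
  invSub_of_forall_apply_mem fun _ hx => ⟨hM.apply_mem hx.1, hM'.apply_mem hx.2⟩

lemma invSub_iSup {ι : Sort*} {p : ι → Submodule ℂ V} (hp : ∀ i, InvSub A (p i)) :
    InvSub A (⨆ i, p i) := by
  rw [InvSub, Submodule.map_iSup]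
  exact iSup_mono hp

lemma InvSub.pow_apply_mem (hM : InvSub A M) {x : V} (hx : x ∈ M) (n : ℕ) : (A ^ n) x ∈ M := by
  induction n with
  | zero => simpa using hx
  | succ n ih => simpa [pow_succ', Module.End.mul_apply] using hM.apply_mem ih

lemma InvSub.aeval_apply_mem (hM : InvSub A M) {x : V} (hx : x ∈ M) (p : ℂ[X]) :
    aeval A p x ∈ M := by
  induction p using Polynomial.induction_on' with
  | add p q hp hq => simpa using add_mem hp hq
  | monomial n a =>
    simpa [Module.algebraMap_end_apply] using M.smul_mem a (hM.pow_apply_mem hx n)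

lemma invSub_sub_smul_iff (μ : ℂ) : InvSub (A - μ • 1) M ↔ InvSub A M := by
  constructor <;> intro h <;> refine invSub_of_forall_apply_mem fun x hx => ?_
  · simpa using add_mem (h.apply_mem hx) (M.smul_mem μ hx)
  · simpa using sub_mem (h.apply_mem hx) (M.smul_mem μ hx)

variable (A) in
lemma invSub_maxGenEigenspace (μ : ℂ) : InvSub A (maxGenEigenspace A μ) :=
  invSub_of_forall_apply_mem fun _ hx => mapsTo_maxGenEigenspace_of_comm (Commute.refl A) μ hx

end Invariant

section Cyclic

variable {A : V →ₗ[ℂ] V}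

variable (A) in
lemma invSub_cyc (x : V) : InvSub A (cyc A x) := by
  rw [InvSub, cyc, map_span, span_le]
  rintro _ ⟨_, ⟨n, rfl⟩, rfl⟩
  exact subset_span ⟨n + 1, by simp only [pow_succ', Module.End.mul_apply]⟩

variable (A) in
lemma self_mem_cyc (x : V) : x ∈ cyc A x :=
  subset_span ⟨0, by simp⟩

lemma cyc_le {M : Submodule ℂ V} (hM : InvSub A M) {x : V} (hx : x ∈ M) : cyc A x ≤ M :=
  span_le.2 <| Set.range_subset_iff.2 (hM.pow_apply_mem hx)

lemma mem_cyc_iff {x v : V} : v ∈ cyc A x ↔ ∃ p : ℂ[X], aeval A p x = v := by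
  refine ⟨fun hv => ?_, ?_⟩
  · induction hv using span_induction with
    | mem v hv => obtain ⟨n, rfl⟩ := hv; exact ⟨X ^ n, by simp⟩
    | zero => exact ⟨0, by simp⟩
    | add v w _ _ hv hw =>
      obtain ⟨p, rfl⟩ := hv
      obtain ⟨q, rfl⟩ := hw
      exact ⟨p + q, by simp⟩
    | smul a v _ hv =>
      obtain ⟨p, rfl⟩ := hv
      exact ⟨C a * p, by simp [Module.algebraMap_end_apply]⟩
  · rintro ⟨p, rfl⟩
    exact (invSub_cyc A x).aeval_apply_mem (self_mem_cyc A x) p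

lemma cyc_sub_smul (μ : ℂ) (x : V) : cyc (A - μ • 1) x = cyc A x :=
  le_antisymm (cyc_le ((invSub_sub_smul_iff μ).2 (invSub_cyc A x)) (self_mem_cyc A x))
    (cyc_le ((invSub_sub_smul_iff μ).1 (invSub_cyc _ x)) (self_mem_cyc _ x))

end Cyclic

section Nilpotent

variable {N : V →ₗ[ℂ] V} {x : V} {d : ℕ}

lemma mem_cyc_aeval_of_coeff_zero_ne_zero (hd : (N ^ d) x = 0) {p : ℂ[X]}
    (hp : p.coeff 0 ≠ 0) :
    x ∈ cyc N (aeval N p x) := by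
  have hcop : IsCoprime p (X ^ d) :=
    (((irreducible_X.coprime_iff_not_dvd).2 (mt X_dvd_iff.1 hp)).symm).pow_right
  obtain ⟨a, b, hab⟩ := hcop
  have hx : aeval N a (aeval N p x) = x := by
    simpa [hd, Module.End.mul_apply] using congrArg (fun q => aeval N q x) hab
  exact mem_cyc_iff.2 ⟨a, hx⟩

lemma notMem_cyc_apply_self (hd : (N ^ d) x = 0) (hx : x ≠ 0) : x ∉ cyc N (N x) := by
  intro hmem
  obtain ⟨q, hq⟩ := mem_cyc_iff.1 hmem
  have hker : aeval N (1 - q * X) x = 0 := by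
    simp [Module.End.mul_apply, hq]
  have := mem_cyc_aeval_of_coeff_zero_ne_zero hd (p := 1 - q * X) (by simp)
  obtain ⟨a, ha⟩ := mem_cyc_iff.1 this
  rw [hker, map_zero] at ha
  exact hx ha.symm

lemma le_cyc_apply_self_of_notMem (hd : (N ^ d) x = 0) {M : Submodule ℂ V} (hM : InvSub N M)
    (hMx : M ≤ cyc N x) (hxM : x ∉ M) : M ≤ cyc N (N x) := by
  intro v hv
  obtain ⟨p, rfl⟩ := mem_cyc_iff.1 (hMx hv)
  by_cases hp : p.coeff 0 = 0
  · obtain ⟨q, rfl⟩ := X_dvd_iff.2 hp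
    exact mem_cyc_iff.2 ⟨q, by simp [mul_comm X q, Module.End.mul_apply]⟩
  · exact absurd (cyc_le hM hv (mem_cyc_aeval_of_coeff_zero_ne_zero hd hp)) hxM

end Nilpotent

/-- Join-irreducibility of `M` in `Lat(A)`; unlike `SupIrred`, `⊥` is allowed. -/
def LatSupIrred (A : V →ₗ[ℂ] V) (M : Submodule ℂ V) : Prop :=
  ∀ M₁ M₂ : Submodule ℂ V, InvSub A M₁ → InvSub A M₂ → M₁ ⊔ M₂ = M → M₁ = M ∨ M₂ = M

section SupIrred

variable {A : V →ₗ[ℂ] V}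

lemma LatSupIrred.exists_eq_of_biSup_eq {M : Submodule ℂ V} (h : LatSupIrred A M) (hM : M ≠ ⊥)
    {ι : Type*} {p : ι → Submodule ℂ V} (hp : ∀ i, InvSub A (p i)) {s : Finset ι}
    (hs : ⨆ i ∈ s, p i = M) : ∃ i ∈ s, p i = M := by
  classical
  induction s using Finset.induction_on with
  | empty => exact absurd (by simpa using hs.symm) hM
  | insert a s _ ih =>
    rw [Finset.iSup_insert] at hs
    rcases h _ _ (hp a) (invSub_iSup fun i => invSub_iSup fun _ => hp i) hs with ha | hs'
    · exact ⟨a, Finset.mem_insert_self a s, ha⟩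
    · obtain ⟨i, hi, hpi⟩ := ih hs'
      exact ⟨i, Finset.mem_insert_of_mem hi, hpi⟩

lemma latSupIrred_cyc_of_mem_maxGenEigenspace {μ : ℂ} {x : V} (hx : x ∈ maxGenEigenspace A μ) :
    LatSupIrred A (cyc A x) := by
  intro M₁ M₂ h₁ h₂ hsup
  by_contra! hne
  obtain ⟨d, hd⟩ := (mem_maxGenEigenspace A μ x).1 hx
  set N := A - μ • 1
  have hsmall : ∀ M, InvSub A M → M ≤ cyc A x → M ≠ cyc A x → M ≤ cyc N (N x) :=
    fun M hM hle hne => le_cyc_apply_self_of_notMem hd ((invSub_sub_smul_iff μ).2 hM)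
      (by rwa [cyc_sub_smul]) fun hxM => hne (le_antisymm hle (cyc_le hM hxM))
  have hM₁ : M₁ ≤ cyc A x := hsup ▸ le_sup_left
  have hM₂ : M₂ ≤ cyc A x := hsup ▸ le_sup_right
  have hle : cyc A x ≤ cyc N (N x) :=
    hsup ▸ sup_le (hsmall M₁ h₁ hM₁ hne.1) (hsmall M₂ h₂ hM₂ hne.2)
  have hx0 : x = 0 := by_contra fun hx0 => notMem_cyc_apply_self hd hx0 (hle (self_mem_cyc A x))
  have hbot : cyc A x = ⊥ :=
    eq_bot_iff.2 (cyc_le (Submodule.map_bot A).le (hx0 ▸ zero_mem ⊥))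
  exact hne.1 (le_antisymm hM₁ (hbot ▸ bot_le))

lemma exists_mem_maxGenEigenspace_of_latSupIrred_cyc [FiniteDimensional ℂ V] {x : V}
    (hx : x ≠ 0) (h : LatSupIrred A (cyc A x)) : ∃ μ, x ∈ maxGenEigenspace A μ := by
  have hinv : ∀ μ, InvSub A (cyc A x ⊓ maxGenEigenspace A μ) :=
    fun μ => (invSub_cyc A x).inf (invSub_maxGenEigenspace A μ)
  have hdecomp : cyc A x = ⨆ μ, cyc A x ⊓ maxGenEigenspace A μ :=
    eq_iSup_inf_genEigenspace ⊤ (fun _ hy => (invSub_cyc A x).apply_mem hy)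
      (iSup_maxGenEigenspace_eq_top A)
  obtain ⟨s, hs⟩ := exists_finset_of_mem_iSup _ (hdecomp ▸ self_mem_cyc A x)
  have heq : ⨆ μ ∈ s, cyc A x ⊓ maxGenEigenspace A μ = cyc A x :=
    le_antisymm (iSup₂_le fun _ _ => inf_le_left)
      (cyc_le (invSub_iSup fun μ => invSub_iSup fun _ => hinv μ) hs)
  have hne : cyc A x ≠ ⊥ := fun hbot => hx (by simpa [hbot] using self_mem_cyc A x)
  obtain ⟨μ, -, hμ⟩ := h.exists_eq_of_biSup_eq hne hinv heq
  exact ⟨μ, (hμ.symm ▸ self_mem_cyc A x : x ∈ cyc A x ⊓ maxGenEigenspace A μ).2⟩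

end SupIrred

section Col

variable {A : V →ₗ[ℂ] V}

lemma Col.map_cyc {T : V →ₗ[ℂ] V} (hT : Col A T) (x : V) : (cyc A x).map T = cyc A (T x) := by
  refine le_antisymm (map_le_iff_le_comap.2 (cyc_le ?_ (self_mem_cyc A (T x))))
    (cyc_le ((hT.2 _).1 (invSub_cyc A x)) (mem_map_of_mem (self_mem_cyc A x)))
  rw [hT.2, map_comap_eq_of_surjective hT.1.2]
  exact invSub_cyc A (T x)

lemma Col.latSupIrred_of_map {T : V →ₗ[ℂ] V} (hT : Col A T) {M : Submodule ℂ V}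
    (h : LatSupIrred A (M.map T)) : LatSupIrred A M := by
  intro M₁ M₂ h₁ h₂ hsup
  refine (h _ _ ((hT.2 M₁).1 h₁) ((hT.2 M₂).1 h₂) ?_).imp
    (map_injective_of_injective hT.1.1 ·) (map_injective_of_injective hT.1.1 ·)
  rw [← Submodule.map_sup, hsup]

lemma Col.symm {e : V ≃ₗ[ℂ] V} (he : Col A e) : Col A e.symm := by
  refine ⟨e.symm.bijective, fun M => ?_⟩
  have := he.2 (M.map e.symm.toLinearMap)
  rw [← Submodule.map_comp] at this
  simpa using this.symm

lemma Col.latSupIrred_cyc_apply_iff {e : V ≃ₗ[ℂ] V} (he : Col A e) {x : V} :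
    LatSupIrred A (cyc A (e x)) ↔ LatSupIrred A (cyc A x) := by
  refine ⟨fun h => he.latSupIrred_of_map ?_, fun h => he.symm.latSupIrred_of_map ?_⟩
  · rwa [he.map_cyc]
  · rwa [he.symm.map_cyc, LinearEquiv.coe_coe, LinearEquiv.symm_apply_apply]

variable [FiniteDimensional ℂ V]

lemma Col.exists_apply_mem_maxGenEigenspace {e : V ≃ₗ[ℂ] V} (he : Col A e) {μ : ℂ} {x : V}
    (hx : x ∈ maxGenEigenspace A μ) : ∃ ν, e x ∈ maxGenEigenspace A ν := by
  by_cases hx0 : x = 0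
  · exact ⟨μ, by simp [hx0]⟩
  exact exists_mem_maxGenEigenspace_of_latSupIrred_cyc (by simpa using hx0)
    (he.latSupIrred_cyc_apply_iff.2 (latSupIrred_cyc_of_mem_maxGenEigenspace hx))

lemma Col.exists_map_maxGenEigenspace_le {e : V ≃ₗ[ℂ] V} (he : Col A e) (μ : ℂ) :
    ∃ ν, (maxGenEigenspace A μ).map (e : V →ₗ[ℂ] V) ≤ maxGenEigenspace A ν :=
  (independent_maxGenEigenspace A).exists_le_of_forall_exists_mem <| by
    rintro _ ⟨y, hy, rfl⟩
    exact he.exists_apply_mem_maxGenEigenspace hy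

lemma Col.exists_map_maxGenEigenspace_eq {e : V ≃ₗ[ℂ] V} (he : Col A e) {μ : ℂ}
    (hμ : maxGenEigenspace A μ ≠ ⊥) :
    ∃ ν, (maxGenEigenspace A μ).map (e : V →ₗ[ℂ] V) = maxGenEigenspace A ν := by
  obtain ⟨ν, hν⟩ := he.exists_map_maxGenEigenspace_le μ
  obtain ⟨μ', hμ'⟩ := he.symm.exists_map_maxGenEigenspace_le ν
  obtain rfl : μ = μ' := eq_of_maxGenEigenspace_le hμ <|
    (map_le_iff_le_comap.1 hν).trans ((comap_equiv_eq_map_symm e _).le.trans hμ')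
  refine ⟨ν, le_antisymm hν ?_⟩
  simpa [comap_equiv_eq_map_symm] using map_le_iff_le_comap.1 hμ'

end Col

lemma genEig_eq_maxGenEigenspace [FiniteDimensional ℂ V] (A : V →ₗ[ℂ] V) (μ : ℂ) :
    genEig A μ = maxGenEigenspace A μ := by
  rw [maxGenEigenspace_eq_genEigenspace_finrank, genEigenspace_nat]
  rfl

end

theorem stmt7 {V : Type*} [AddCommGroup V] [Module ℂ V] [FiniteDimensional ℂ V]
    (A T : V →ₗ[ℂ] V) (hT : Col A T) :
    ∃ π : ℂ → ℂ,
      Set.BijOn π {lam | Module.End.HasEigenvalue A lam} {lam | Module.End.HasEigenvalue A lam} ∧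
      ∀ lam : ℂ, Module.End.HasEigenvalue A lam →
        (genEig A lam).map T = genEig A (π lam) := by
  set e := LinearEquiv.ofBijective T hT.1
  have he : Col A e := hT
  simp only [genEig_eq_maxGenEigenspace, hasEigenvalue_iff_maxGenEigenspace_ne_bot]
  choose! π hπ using
    fun μ (hμ : maxGenEigenspace A μ ≠ ⊥) => he.exists_map_maxGenEigenspace_eq hμ
  have hπ_ne_bot : ∀ μ, maxGenEigenspace A μ ≠ ⊥ → maxGenEigenspace A (π μ) ≠ ⊥ :=
    fun μ hμ => by rwa [← hπ μ hμ, Ne, Submodule.map_eq_bot_iff]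
  refine ⟨π, ⟨hπ_ne_bot, fun μ hμ μ' hμ' h => ?_, fun ν hν => ?_⟩, hπ⟩
  · have hmap : (maxGenEigenspace A μ).map (e : V →ₗ[ℂ] V) =
        (maxGenEigenspace A μ').map (e : V →ₗ[ℂ] V) := by
      rw [hπ μ hμ, hπ μ' hμ', h]
    exact eq_of_maxGenEigenspace_le hμ (map_injective_of_injective e.injective hmap).le
  · obtain ⟨μ, hμ⟩ := he.symm.exists_map_maxGenEigenspace_eq hν
    have hμ_ne_bot : maxGenEigenspace A μ ≠ ⊥ := by rwa [← hμ, Ne, Submodule.map_eq_bot_iff]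
    refine ⟨μ, hμ_ne_bot, eq_of_maxGenEigenspace_le (hπ_ne_bot μ hμ_ne_bot) ?_⟩
    rw [← hπ μ hμ_ne_bot, ← (map_symm_eq_iff e).1 hμ]
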